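/- arXiv:1911.07687 — 3 statements merged into one kernel-verified Lean document; each statement's English description precedes it below -/
import Mathlib

section
/- Let f : X → ℝ be differentiable and concave on an open convex set X ⊆ ℝⁿ, and g : X → ℝ be affine and strictly positive on X. Then u = f/g is pseudo-concave on X: for all x, y ∈ X, if u(y) < u(x) then ∇u(y)ᵀ(x - y) > 0. -/
/-!
Along the segment from `y` to `x`, concavity bounds the directional derivative of `f` below by
`f x - f y`, and affineness makes that of `g` exactly `g x - g y`. The quotient rule then gives
`g y ^ 2 · ∂u ≥ (f x - f y) g y - f y (g x - g y) = f x g y - f y g x`, which is positive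
precisely when `u y < u x`.
-/

open Filter Set Topology

section LineDeriv

variable {E : Type*} [NormedAddCommGroup E] [NormedSpace ℝ E] {f : E → ℝ} {f' : ℝ} {x y : E}

theorem HasLineDerivAt.tendsto_slope_segment (h : HasLineDerivAt ℝ f f' y (x - y)) :
    Tendsto (fun t : ℝ => t⁻¹ * (f (t • x + (1 - t) • y) - f y)) (𝓝[>] 0) (𝓝 f') := by
  have hpt : ∀ t : ℝ, y + t • (x - y) = t • x + (1 - t) • y := fun t => by module
  simpa only [hpt, smul_eq_mul] using h.tendsto_slope_zero_right

theorem HasLineDerivAt.sub_le_of_segment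
    (h : HasLineDerivAt ℝ f f' y (x - y))
    (hseg : ∀ t ∈ Ioc (0 : ℝ) 1, t * f x + (1 - t) * f y ≤ f (t • x + (1 - t) • y)) :
    f x - f y ≤ f' := by
  refine ge_of_tendsto h.tendsto_slope_segment ?_
  filter_upwards [Ioc_mem_nhdsGT zero_lt_one] with t ht
  rw [← div_eq_inv_mul, le_div_iff₀ ht.1]
  linarith [hseg t ht]

theorem HasLineDerivAt.eq_sub_of_segment
    (h : HasLineDerivAt ℝ f f' y (x - y))
    (hseg : ∀ t ∈ Ioc (0 : ℝ) 1, f (t • x + (1 - t) • y) = t * f x + (1 - t) * f y) :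
    f' = f x - f y := by
  refine tendsto_nhds_unique h.tendsto_slope_segment (tendsto_const_nhds.congr' ?_)
  filter_upwards [Ioc_mem_nhdsGT zero_lt_one] with t ht
  rw [hseg t ht]
  field_simp [ht.1.ne']
  ring

theorem ConcaveOn.sub_le_of_hasLineDerivAt {s : Set E} (hf : ConcaveOn ℝ s f) (hx : x ∈ s)
    (hy : y ∈ s) (h : HasLineDerivAt ℝ f f' y (x - y)) : f x - f y ≤ f' :=
  h.sub_le_of_segment fun t ht => by
    simpa only [smul_eq_mul] using hf.2 hx hy ht.1.le (sub_nonneg.2 ht.2) (add_sub_cancel t 1)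

theorem HasLineDerivAt.fun_div {𝕜 : Type*} [NontriviallyNormedField 𝕜] {F : Type*}
    [NormedAddCommGroup F] [NormedSpace 𝕜 F] {f g : F → 𝕜} {f' g' : 𝕜} {x v : F}
    (hf : HasLineDerivAt 𝕜 f f' x v) (hg : HasLineDerivAt 𝕜 g g' x v) (hx : g x ≠ 0) :
    HasLineDerivAt 𝕜 (fun z => f z / g z) ((f' * g x - f x * g') / g x ^ 2) x v := by
  unfold HasLineDerivAt at *
  simpa using hf.fun_div hg (by simpa using hx)

end LineDeriv

theorem pseudoconcave_ratio_general {n : ℕ} (X : Set (Fin n → ℝ))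
    (f g : (Fin n → ℝ) → ℝ)
    (hfd : ∀ x ∈ X, DifferentiableAt ℝ f x)
    (hf : ConcaveOn ℝ X f)
    (hgaff : ∀ x ∈ X, ∀ y ∈ X, ∀ l : ℝ, 0 ≤ l → l ≤ 1 →
      g (l • x + (1 - l) • y) = l * g x + (1 - l) * g y)
    (hgd : ∀ x ∈ X, DifferentiableAt ℝ g x)
    (hgpos : ∀ x ∈ X, 0 < g x) :
    ∀ x ∈ X, ∀ y ∈ X, f y / g y < f x / g x →
      0 < fderiv ℝ (fun z => f z / g z) y (x - y) := by
  intro x hx y hy hlt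
  have hgx := hgpos x hx
  have hgy := hgpos y hy
  have hF := (hfd y hy).hasFDerivAt.hasLineDerivAt (x - y)
  have hG := (hgd y hy).hasFDerivAt.hasLineDerivAt (x - y)
  have hFge := hf.sub_le_of_hasLineDerivAt hx hy hF
  have hGeq := hG.eq_sub_of_segment fun t ht => hgaff x hx y hy t ht.1.le ht.2
  have hquot : DifferentiableAt ℝ (fun z => f z / g z) y := by
    simpa only [div_eq_mul_inv] using (hfd y hy).fun_mul ((hgd y hy).fun_inv hgy.ne')
  rw [← hquot.lineDeriv_eq_fderiv, (hF.fun_div hG hgy.ne').lineDeriv, hGeq]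
  have hcross : f y * g x < f x * g y := by rwa [div_lt_div_iff₀ hgy hgx] at hlt
  apply div_pos _ (by positivity)
  nlinarith [mul_le_mul_of_nonneg_right hFge hgy.le]

/-- Ratio of a differentiable concave function and a strictly positive affine
function is pseudo-concave on an open convex set. -/
theorem pseudoconcave_ratio {n : ℕ} (X : Set (Fin n → ℝ)) (hXo : IsOpen X)
    (hX : Convex ℝ X) (f g : (Fin n → ℝ) → ℝ)
    (hfd : ∀ x ∈ X, DifferentiableAt ℝ f x)
    (hf : ConcaveOn ℝ X f)
    (hgaff : ∀ x ∈ X, ∀ y ∈ X, ∀ l : ℝ, 0 ≤ l → l ≤ 1 →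
      g (l • x + (1 - l) • y) = l * g x + (1 - l) * g y)
    (hgd : ∀ x ∈ X, DifferentiableAt ℝ g x)
    (hgpos : ∀ x ∈ X, 0 < g x) :
    ∀ x ∈ X, ∀ y ∈ X, f y / g y < f x / g x →
      0 < fderiv ℝ (fun z => f z / g z) y (x - y) :=
  pseudoconcave_ratio_general X f g hfd hf hgaff hgd hgpos
end

section
/- For p > 0, let u(p) = log(1 + a·p)/(p + c) with constants a > 0 and c > 0. Then there exists a unique p* > 0 such that u is strictly increasing on (0, p*) and strictly decreasing on (p*, ∞), and p* satisfies a·(p* + c)/(1 + a·p*) = log(1 + a·p*). -/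
/-!
The derivative of `u(p) = log (1 + a p) / (p + c)` is `g(p) / (p + c)²` with
`g(p) = a (p + c) / (1 + a p) - log (1 + a p)`, and `g' = -a² (p + c) / (1 + a p)² < 0`.
So `g` is strictly decreasing on `[0, ∞)`, from `g 0 = a c > 0` to `-∞` (it is bounded by
`1 + a c - log (1 + a p)`), and has a unique zero `p*`; `u` increases while `g > 0` and
decreases once `g < 0`. The first-order condition is `g p* = 0`, so by injectivity of `g` it
determines `p*`.
-/

open Real Set

namespace EnergyEfficiency

variable {a c : ℝ}

/-- The numerator of the derivative of `p ↦ log (1 + a p) / (p + c)`. -/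
noncomputable def firstOrderGap (a c p : ℝ) : ℝ :=
  a * (p + c) / (1 + a * p) - log (1 + a * p)

theorem hasDerivAt_log_one_add_mul {p : ℝ} (hp : 1 + a * p ≠ 0) :
    HasDerivAt (fun q => log (1 + a * q)) (a / (1 + a * p)) p := by
  simpa using (((hasDerivAt_id p).const_mul a).const_add 1).log hp

theorem hasDerivAt_firstOrderGap {p : ℝ} (hp : 1 + a * p ≠ 0) :
    HasDerivAt (firstOrderGap a c) (-(a ^ 2 * (p + c)) / (1 + a * p) ^ 2) p := by
  have hnum : HasDerivAt (fun q => a * (q + c)) a p := by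
    simpa using ((hasDerivAt_id p).add_const c).const_mul a
  have hden : HasDerivAt (fun q => 1 + a * q) a p := by
    simpa using ((hasDerivAt_id p).const_mul a).const_add 1
  refine ((hnum.div hden hp).sub (hasDerivAt_log_one_add_mul hp)).congr_deriv ?_
  field_simp
  ring

theorem hasDerivAt_log_one_add_mul_div_add {p : ℝ} (hp : 1 + a * p ≠ 0) (hpc : p + c ≠ 0) :
    HasDerivAt (fun q => log (1 + a * q) / (q + c)) (firstOrderGap a c p / (p + c) ^ 2) p := by
  refine ((hasDerivAt_log_one_add_mul hp).div ((hasDerivAt_id p).add_const c) hpc).congr_deriv ?_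
  simp only [firstOrderGap, id]
  field_simp

theorem strictAntiOn_firstOrderGap (ha : 0 < a) (hc : 0 ≤ c) :
    StrictAntiOn (firstOrderGap a c) (Ici 0) := by
  have hderiv : ∀ p ∈ Ici (0 : ℝ), HasDerivAt (firstOrderGap a c)
      (-(a ^ 2 * (p + c)) / (1 + a * p) ^ 2) p := fun p hp =>
    hasDerivAt_firstOrderGap (by have : (0 : ℝ) ≤ p := hp; positivity)
  refine strictAntiOn_of_deriv_neg (convex_Ici 0)
    (fun p hp => (hderiv p hp).continuousAt.continuousWithinAt) fun p hp => ?_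
  rw [interior_Ici] at hp
  have hp : 0 < p := hp
  rw [(hderiv p hp.le).deriv, neg_div, neg_lt_zero]
  positivity

theorem firstOrderGap_zero : firstOrderGap a c 0 = a * c := by
  simp [firstOrderGap]

theorem firstOrderGap_le (ha : 0 < a) (hc : 0 ≤ c) {p : ℝ} (hp : 0 ≤ p) :
    firstOrderGap a c p ≤ 1 + a * c - log (1 + a * p) := by
  have hden : 0 < 1 + a * p := by positivity
  have hfrac : a * (p + c) / (1 + a * p) ≤ 1 + a * c := by
    rw [div_le_iff₀ hden]
    nlinarith [mul_nonneg (mul_nonneg ha.le hc) (mul_nonneg ha.le hp)]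
  unfold firstOrderGap
  linarith

theorem exists_firstOrderGap_eq_zero (ha : 0 < a) (hc : 0 < c) :
    ∃ p, 0 < p ∧ firstOrderGap a c p = 0 := by
  set P := (exp (2 + a * c) - 1) / a
  have hexp : 1 < exp (2 + a * c) := one_lt_exp_iff.mpr (by positivity)
  have hP : 0 < P := div_pos (by linarith) ha
  have hlog : log (1 + a * P) = 2 + a * c := by
    rw [mul_div_cancel₀ _ ha.ne', add_sub_cancel, log_exp]
  have hgapP : firstOrderGap a c P < 0 := by
    linarith [firstOrderGap_le ha hc.le hP.le]
  have hcont : ContinuousOn (firstOrderGap a c) (Icc 0 P) := fun p hp =>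
    (hasDerivAt_firstOrderGap (c := c) (by have := hp.1; positivity)).continuousAt.continuousWithinAt
  obtain ⟨p, hp, hzero⟩ := intermediate_value_Ioo' hP.le hcont
    ⟨hgapP, by rw [firstOrderGap_zero]; positivity⟩
  exact ⟨p, hp.1, hzero⟩

variable {pstar : ℝ}

theorem strictMonoOn_log_one_add_mul_div_add (ha : 0 < a) (hc : 0 < c)
    (hpstar : firstOrderGap a c pstar = 0) :
    StrictMonoOn (fun p => log (1 + a * p) / (p + c)) (Icc 0 pstar) := by
  have hderiv : ∀ p ∈ Icc (0 : ℝ) pstar, HasDerivAt (fun q => log (1 + a * q) / (q + c))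
      (firstOrderGap a c p / (p + c) ^ 2) p := fun p hp =>
    hasDerivAt_log_one_add_mul_div_add (by have := hp.1; positivity)
      (by have := hp.1; positivity)
  refine strictMonoOn_of_deriv_pos (convex_Icc 0 pstar)
    (fun p hp => (hderiv p hp).continuousAt.continuousWithinAt) fun p hp => ?_
  rw [interior_Icc] at hp
  rw [(hderiv p (Ioo_subset_Icc_self hp)).deriv]
  have hgap : 0 < firstOrderGap a c p :=
    hpstar ▸ strictAntiOn_firstOrderGap ha hc.le hp.1.le (hp.1.trans hp.2).le hp.2
  have := hp.1
  positivity

theorem strictAntiOn_log_one_add_mul_div_add (ha : 0 < a) (hc : 0 < c) (hpstar0 : 0 ≤ pstar)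
    (hpstar : firstOrderGap a c pstar = 0) :
    StrictAntiOn (fun p => log (1 + a * p) / (p + c)) (Ici pstar) := by
  have hderiv : ∀ p ∈ Ici pstar, HasDerivAt (fun q => log (1 + a * q) / (q + c))
      (firstOrderGap a c p / (p + c) ^ 2) p := fun p hp => by
    have : 0 ≤ p := hpstar0.trans hp
    exact hasDerivAt_log_one_add_mul_div_add (by positivity) (by positivity)
  refine strictAntiOn_of_deriv_neg (convex_Ici pstar)
    (fun p hp => (hderiv p hp).continuousAt.continuousWithinAt) fun p hp => ?_
  rw [interior_Ici] at hp
  have hp0 : 0 < p := hpstar0.trans_lt hp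
  rw [(hderiv p (mem_Ici.mpr hp.le)).deriv]
  have hgap : firstOrderGap a c p < 0 :=
    hpstar ▸ strictAntiOn_firstOrderGap ha hc.le hpstar0 hp0.le hp
  exact div_neg_of_neg_of_pos hgap (by positivity)

end EnergyEfficiency

open EnergyEfficiency in
/-- The single-channel energy efficiency u(p) = log(1+ap)/(p+c) has a unique
maximizer p* > 0: u is strictly increasing before p*, strictly decreasing after,
and p* satisfies a(p*+c)/(1+ap*) = log(1+ap*). -/
theorem ee_unique_maximizer (a c : ℝ) (ha : 0 < a) (hc : 0 < c) :
    ∃! pstar : ℝ, 0 < pstar ∧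
      StrictMonoOn (fun p => Real.log (1 + a * p) / (p + c)) (Set.Ioc 0 pstar) ∧
      StrictAntiOn (fun p => Real.log (1 + a * p) / (p + c)) (Set.Ici pstar) ∧
      a * (pstar + c) / (1 + a * pstar) = Real.log (1 + a * pstar) := by
  obtain ⟨pstar, hpos, hgap⟩ := exists_firstOrderGap_eq_zero ha hc
  refine ⟨pstar, ⟨hpos, ?_, ?_, sub_eq_zero.mp hgap⟩, ?_⟩
  · exact (strictMonoOn_log_one_add_mul_div_add ha hc hgap).mono Ioc_subset_Icc_self
  · exact strictAntiOn_log_one_add_mul_div_add ha hc hpos.le hgap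
  · rintro q ⟨hq, -, -, hfoc⟩
    exact (strictAntiOn_firstOrderGap ha hc.le).injOn hq.le hpos.le
      ((sub_eq_zero.mpr hfoc).trans hgap.symm)
end

section
/- Let BR : ℝ₊ᵏ → ℝ₊ᵏ be a standard function, i.e., (1) BR(q) ≥ 0 for all q ≥ 0 (componentwise), (2) q' ≥ q implies BR(q') ≥ BR(q), (3) for all α > 1 and q ≥ 0, BR(αq) < α·BR(q) (componentwise strict). Then BR has at most one fixed point in ℝ₊ᵏ with all components strictly positive. -/
/-!
If `p` and `p'` are positive fixed points and `p ≰ p'`, scale `p'` by the smallest `α` with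
`p ≤ α • p'`; then `α > 1` and `p i = α * p' i` at some coordinate `i`. Monotonicity and
scalability give `p i = BR p i ≤ BR (α • p') i < α * BR p' i = α * p' i`, a contradiction.
By symmetry `p = p'`.
-/

open Function

theorem exists_le_smul_eq_mul_of_pos {ι : Type*} [Fintype ι] [Nonempty ι] (p q : ι → ℝ)
    (hq : ∀ i, 0 < q i) : ∃ α : ℝ, p ≤ α • q ∧ ∃ i, p i = α * q i := by
  obtain ⟨i, -, hi⟩ := Finset.exists_max_image Finset.univ (fun i => p i / q i)
    Finset.univ_nonempty
  refine ⟨p i / q i, fun j => ?_, i, (div_mul_cancel₀ _ (hq i).ne').symm⟩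
  exact (div_le_iff₀ (hq j)).mp (hi j (Finset.mem_univ j))

theorem le_of_isFixedPt_of_scalable {ι : Type*} [Fintype ι] (f : (ι → ℝ) → ι → ℝ)
    (hmono : ∀ q q' : ι → ℝ, 0 ≤ q → q ≤ q' → f q ≤ f q')
    (hscal : ∀ α : ℝ, 1 < α → ∀ q : ι → ℝ, 0 ≤ q → ∀ i, f (α • q) i < α * f q i)
    {p p' : ι → ℝ} (hp_nonneg : 0 ≤ p) (hp : IsFixedPt f p)
    (hp'_pos : ∀ i, 0 < p' i) (hp' : IsFixedPt f p') : p ≤ p' := by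
  by_contra hle
  obtain ⟨j, hj⟩ : ∃ j, p' j < p j := by simpa [Pi.le_def] using hle
  have : Nonempty ι := ⟨j⟩
  obtain ⟨α, hp_le, i, hi⟩ := exists_le_smul_eq_mul_of_pos p p' hp'_pos
  have hα : 1 < α := by
    have : p j ≤ α * p' j := hp_le j
    nlinarith [hp'_pos j]
  have hlt : p i < p i :=
    calc p i = f p i := (congrFun hp.eq i).symm
      _ ≤ f (α • p') i := hmono p (α • p') hp_nonneg hp_le i
      _ < α * f p' i := hscal α hα p' (fun i => (hp'_pos i).le) i
      _ = p i := by rw [hp'.eq, hi]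
  exact lt_irrefl _ hlt

theorem standard_function_unique_fixed_point_general {k : ℕ}
    (BR : (Fin k → ℝ) → (Fin k → ℝ))
    (hmono : ∀ q q' : Fin k → ℝ, 0 ≤ q → q ≤ q' → BR q ≤ BR q')
    (hscal : ∀ α : ℝ, 1 < α → ∀ q : Fin k → ℝ, 0 ≤ q →
      ∀ i, BR (α • q) i < α * BR q i)
    (p p' : Fin k → ℝ)
    (hp : (∀ i, 0 < p i) ∧ BR p = p)
    (hp' : (∀ i, 0 < p' i) ∧ BR p' = p') :
    p = p' :=
  le_antisymm
    (le_of_isFixedPt_of_scalable BR hmono hscal (fun i => (hp.1 i).le) hp.2 hp'.1 hp'.2)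
    (le_of_isFixedPt_of_scalable BR hmono hscal (fun i => (hp'.1 i).le) hp'.2 hp.1 hp.2)

/-- A standard function (positive, monotone, scalable in the sense of Yates)
has at most one strictly positive fixed point. -/
theorem standard_function_unique_fixed_point {k : ℕ}
    (BR : (Fin k → ℝ) → (Fin k → ℝ))
    (hpos : ∀ q : Fin k → ℝ, 0 ≤ q → 0 ≤ BR q)
    (hmono : ∀ q q' : Fin k → ℝ, 0 ≤ q → q ≤ q' → BR q ≤ BR q')
    (hscal : ∀ α : ℝ, 1 < α → ∀ q : Fin k → ℝ, 0 ≤ q →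
      ∀ i, BR (α • q) i < α * BR q i)
    (p p' : Fin k → ℝ)
    (hp : (∀ i, 0 < p i) ∧ BR p = p)
    (hp' : (∀ i, 0 < p' i) ∧ BR p' = p') :
    p = p' :=
  standard_function_unique_fixed_point_general BR hmono hscal p p' hp hp'
end
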